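/- arXiv:2104.07024 — 4 statements merged into one kernel-verified Lean document; each statement's English description precedes it below -/
import Mathlib

section
/- Let n be a natural number, let x₀ be a real number, and let v : ℝ → ℝ be n times differentiable in a neighborhood of x₀ with v nonvanishing in a neighborhood of x₀. Then the n-th derivative of x ↦ 1/v(x) at x₀ equals n! · Σ_{y} [ ( (Σᵢ yᵢ)! / (y₁! ⋯ yₙ!) ) · (−1)^{Σᵢ yᵢ} / v(x₀)^{(Σᵢ yᵢ)+1} · Πᵢ₌₁ⁿ ( v⁽ⁱ⁾(x₀)/i! )^{yᵢ} ], where the sum runs over all tuples y = (y₁, …, yₙ) of nonnegative integers satisfying Σᵢ₌₁ⁿ i·yᵢ = n, and v⁽ⁱ⁾ denotes the i-th derivative of v. -/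
/-!
Leibniz' rule applied to `v * v⁻¹ = 1` shows that the Taylor coefficients `(v⁻¹)⁽ᵏ⁾(x₀) / k!`,
`k ≤ n`, satisfy the recursion that determines the coefficients of the inverse of the power series
`∑ₖ v⁽ᵏ⁾(x₀) / k! Xᵏ`. Writing that series as `v(x₀) + P` with `X ∣ P`, its inverse agrees up to
order `n` with the geometric sum `∑_{m ≤ n} (-1)ᵐ Pᵐ / v(x₀)ᵐ⁺¹`, and the multinomial theorem
expands `Pᵐ` into a sum over the multiplicity vectors of partitions of `n` into `m` parts.
-/

open Finset Filter Topology
open scoped Nat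

-- part `i + 1` of the partition occurs `y i` times
def partitionMultiplicities (n : ℕ) : Finset (Fin n → ℕ) :=
  (Fintype.piFinset fun _ : Fin n => range (n + 1)).filter
    fun y => ∑ i : Fin n, ((i : ℕ) + 1) * y i = n

theorem sum_le_of_sum_succ_mul_eq {n : ℕ} {y : Fin n → ℕ}
    (hy : ∑ i : Fin n, ((i : ℕ) + 1) * y i = n) : ∑ i, y i ≤ n :=
  calc ∑ i, y i ≤ ∑ i : Fin n, ((i : ℕ) + 1) * y i :=
        sum_le_sum fun _ _ => Nat.le_mul_of_pos_left _ (Nat.succ_pos _)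
    _ = n := hy

theorem mem_partitionMultiplicities {n : ℕ} {y : Fin n → ℕ} :
    y ∈ partitionMultiplicities n ↔ ∑ i : Fin n, ((i : ℕ) + 1) * y i = n := by
  refine ⟨fun h => (mem_filter.1 h).2,
    fun h => mem_filter.2 ⟨Fintype.mem_piFinset.2 fun i => ?_, h⟩⟩
  exact mem_range_succ_iff.2 ((single_le_sum (fun _ _ => Nat.zero_le _) (mem_univ i)).trans
    (sum_le_of_sum_succ_mul_eq h))

theorem sum_range_sum_piAntidiag_eq_sum_partitionMultiplicities {M : Type*} [AddCommMonoid M]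
    (n : ℕ) (F : ℕ → (Fin n → ℕ) → M) :
    ∑ m ∈ range (n + 1), ∑ y ∈ (piAntidiag univ m).filter
        (fun y => ∑ i : Fin n, ((i : ℕ) + 1) * y i = n), F m y =
      ∑ y ∈ partitionMultiplicities n, F (∑ i, y i) y := by
  rw [← sum_fiberwise_of_maps_to (g := fun y : Fin n → ℕ => ∑ i, y i) fun y hy =>
    mem_range_succ_iff.2 (sum_le_of_sum_succ_mul_eq (mem_partitionMultiplicities.1 hy))]
  refine sum_congr rfl fun m _ => sum_congr ?_ fun y hy => ?_
  · ext y
    simp [mem_partitionMultiplicities, and_comm]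
  · rw [(mem_filter.1 hy).2]

namespace PowerSeries

theorem coeff_sum_C_mul_X_pow_pow {R ι : Type*} [CommSemiring R] [DecidableEq ι]
    (s : Finset ι) (a : ι → R) (d : ι → ℕ) (m N : ℕ) :
    coeff N ((∑ i ∈ s, C (a i) * X ^ d i) ^ m) =
      ∑ y ∈ (piAntidiag s m).filter (fun y => ∑ i ∈ s, d i * y i = N),
        (Nat.multinomial s y : R) * ∏ i ∈ s, a i ^ y i := by
  rw [sum_pow_eq_sum_piAntidiag, map_sum, sum_filter]
  refine sum_congr rfl fun y _ => ?_
  have hmon : (Nat.multinomial s y : R⟦X⟧) * ∏ i ∈ s, (C (a i) * X ^ d i) ^ y i =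
      C ((Nat.multinomial s y : R) * ∏ i ∈ s, a i ^ y i) * X ^ (∑ i ∈ s, d i * y i) := by
    simp only [mul_pow, prod_mul_distrib, ← pow_mul, prod_pow_eq_pow_sum, map_mul, map_prod,
      map_pow, map_natCast]
    ring
  rw [hmon, coeff_C_mul_X_pow]
  simp only [eq_comm]

variable {k : Type*} [Field k]

theorem coeff_eq_coeff_inv_of_X_pow_dvd {f g : k⟦X⟧} {n m : ℕ} (hf : constantCoeff f ≠ 0)
    (h : X ^ n ∣ f * g - 1) (hm : m < n) : coeff m g = coeff m f⁻¹ := by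
  have hdvd : X ^ n ∣ g - f⁻¹ := by
    have e : g - f⁻¹ = f⁻¹ * (f * g - 1) := by
      rw [mul_sub, ← mul_assoc, PowerSeries.inv_mul_cancel _ hf, one_mul, mul_one]
    exact e ▸ dvd_mul_of_dvd_right h _
  rw [← sub_eq_zero, ← map_sub]
  exact X_pow_dvd_iff.1 hdvd m hm

theorem X_pow_succ_dvd_sub_C_add_sum (f : k⟦X⟧) (n : ℕ) :
    X ^ (n + 1) ∣
      f - (C (constantCoeff f) + ∑ i : Fin n, C (coeff ((i : ℕ) + 1) f) * X ^ ((i : ℕ) + 1)) := by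
  refine X_pow_dvd_iff.2 fun j hj => ?_
  rcases j with _ | l
  · simp
  · have hl : l < n := by omega
    simp only [map_sub, map_add, map_sum, coeff_C, coeff_C_mul_X_pow, Nat.add_right_cancel_iff,
      add_eq_zero, one_ne_zero, and_false, if_false, zero_add]
    rw [Fin.sum_univ_eq_sum_range (fun i => if l = i then coeff (i + 1) f else 0), sum_ite_eq,
      if_pos (mem_range.2 hl), sub_self]

theorem coeff_inv_eq_sum_partitionMultiplicities (f : k⟦X⟧) (hf : constantCoeff f ≠ 0) (n : ℕ) :
    coeff n f⁻¹ = ∑ y ∈ partitionMultiplicities n,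
      (Nat.multinomial univ y : k) * (-1) ^ (∑ i, y i) / constantCoeff f ^ (∑ i, y i + 1) *
        ∏ i : Fin n, coeff ((i : ℕ) + 1) f ^ y i := by
  set f₀ := constantCoeff f
  set P : k⟦X⟧ := ∑ i : Fin n, C (coeff ((i : ℕ) + 1) f) * X ^ ((i : ℕ) + 1)
  set Q : k⟦X⟧ := ∑ m ∈ range (n + 1), C ((-1) ^ m / f₀ ^ (m + 1)) * P ^ m
  have hXP : X ∣ P := dvd_sum fun i _ => dvd_mul_of_dvd_right (dvd_pow_self X i.val.succ_ne_zero) _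
  have hgeom : (C f₀ + P) * Q = 1 - (-(C f₀⁻¹ * P)) ^ (n + 1) := by
    have hQ : Q = C f₀⁻¹ * ∑ m ∈ range (n + 1), (-(C f₀⁻¹ * P)) ^ m := by
      rw [mul_sum]
      refine sum_congr rfl fun m _ => ?_
      have hc : (-1 : k) ^ m / f₀ ^ (m + 1) = f₀⁻¹ * (-f₀⁻¹) ^ m := by
        rw [div_eq_mul_inv, ← inv_pow, pow_succ, neg_pow f₀⁻¹]
        ring
      rw [hc, map_mul, map_pow, map_neg]
      ring
    have hC : C f₀ + P = C f₀ * (1 - -(C f₀⁻¹ * P)) := by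
      rw [sub_neg_eq_add, mul_add, mul_one, ← mul_assoc, ← map_mul, mul_inv_cancel₀ hf, map_one,
        one_mul]
    rw [hQ, hC, mul_mul_mul_comm, ← map_mul, mul_inv_cancel₀ hf, map_one, one_mul, mul_neg_geom_sum]
  have hdvd : X ^ (n + 1) ∣ f * Q - 1 := by
    have e : f * Q - 1 = (f - (C f₀ + P)) * Q - (-(C f₀⁻¹ * P)) ^ (n + 1) := by
      rw [sub_mul, hgeom]; ring
    rw [e]
    exact dvd_sub (dvd_mul_of_dvd_left (X_pow_succ_dvd_sub_C_add_sum f n) _)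
      (pow_dvd_pow_of_dvd (dvd_neg.2 (dvd_mul_of_dvd_right hXP _)) _)
  rw [← coeff_eq_coeff_inv_of_X_pow_dvd hf hdvd n.lt_succ_self,
    ← sum_range_sum_piAntidiag_eq_sum_partitionMultiplicities n fun m y =>
      (Nat.multinomial univ y : k) * (-1) ^ m / f₀ ^ (m + 1) *
        ∏ i : Fin n, coeff ((i : ℕ) + 1) f ^ y i]
  simp only [Q, P, map_sum, coeff_C_mul, coeff_sum_C_mul_X_pow_pow, mul_sum]
  exact sum_congr rfl fun m _ => sum_congr rfl fun y _ => by ring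

end PowerSeries

section Leibniz

variable {𝕜 𝔸 : Type*} [NontriviallyNormedField 𝕜] [NormedRing 𝔸] [NormedAlgebra 𝕜 𝔸]

theorem iteratedDeriv_mul_eventuallyEq {f g : 𝕜 → 𝔸} {x₀ : 𝕜} {n : ℕ}
    (hf : ∀ i < n, ∀ᶠ x in 𝓝 x₀, DifferentiableAt 𝕜 (iteratedDeriv i f) x)
    (hg : ∀ i < n, ∀ᶠ x in 𝓝 x₀, DifferentiableAt 𝕜 (iteratedDeriv i g) x) :
    iteratedDeriv n (f * g) =ᶠ[𝓝 x₀] fun x => ∑ p ∈ antidiagonal n,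
      (n.choose p.1 : 𝔸) * (iteratedDeriv p.1 f x * iteratedDeriv p.2 g x) := by
  induction n with
  | zero => exact .of_forall fun x => by simp
  | succ n ih =>
    have hfg : ∀ᶠ x in 𝓝 x₀, ∀ i ∈ range (n + 1),
        DifferentiableAt 𝕜 (iteratedDeriv i f) x ∧ DifferentiableAt 𝕜 (iteratedDeriv i g) x :=
      (eventually_all_finset _).2 fun i hi =>
        (hf i (mem_range.1 hi)).and (hg i (mem_range.1 hi))
    filter_upwards [(ih (fun i hi => hf i (by omega)) (fun i hi => hg i (by omega))).deriv, hfg]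
      with x hx hd
    have hderiv : HasDerivAt (fun x => ∑ p ∈ antidiagonal n,
        (n.choose p.1 : 𝔸) * (iteratedDeriv p.1 f x * iteratedDeriv p.2 g x))
        (∑ p ∈ antidiagonal n, (n.choose p.1 : 𝔸) *
          (iteratedDeriv (p.1 + 1) f x * iteratedDeriv p.2 g x +
            iteratedDeriv p.1 f x * iteratedDeriv (p.2 + 1) g x)) x := by
      refine HasDerivAt.fun_sum fun p hp => HasDerivAt.const_mul _ ?_
      have hp : p.1 < n + 1 ∧ p.2 < n + 1 := by
        have := mem_antidiagonal.1 hp; omega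
      rw [iteratedDeriv_succ, iteratedDeriv_succ]
      exact (hd _ (mem_range.2 hp.1)).1.hasDerivAt.mul (hd _ (mem_range.2 hp.2)).2.hasDerivAt
    rw [iteratedDeriv_succ, hx, hderiv.deriv, sum_antidiagonal_choose_succ_mul
      (fun i j => iteratedDeriv i f x * iteratedDeriv j g x), add_comm, ← sum_add_distrib]
    refine sum_congr rfl fun p hp => ?_
    rw [Nat.choose_symm_of_eq_add (mem_antidiagonal.1 hp).symm, mul_add]

end Leibniz

section Reciprocal

open PowerSeries

variable {𝕜 : Type*} [NontriviallyNormedField 𝕜] {v : 𝕜 → 𝕜} {x₀ : 𝕜} {n : ℕ}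

theorem eventually_sum_antidiagonal_choose_mul_iteratedDeriv_inv_eq_zero (hn : n ≠ 0)
    (hv : ∀ i < n, ∀ᶠ x in 𝓝 x₀, DifferentiableAt 𝕜 (iteratedDeriv i v) x)
    (hw : ∀ i < n, ∀ᶠ x in 𝓝 x₀, DifferentiableAt 𝕜 (iteratedDeriv i v⁻¹) x)
    (hvne : ∀ᶠ x in 𝓝 x₀, v x ≠ 0) :
    ∀ᶠ x in 𝓝 x₀, ∑ p ∈ antidiagonal n,
      (n.choose p.1 : 𝕜) * (iteratedDeriv p.1 v x * iteratedDeriv p.2 v⁻¹ x) = 0 := by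
  have hone : v * v⁻¹ =ᶠ[𝓝 x₀] fun _ => 1 := hvne.mono fun x hx => mul_inv_cancel₀ hx
  filter_upwards [hone.iteratedDeriv n, iteratedDeriv_mul_eventuallyEq hv hw] with x h1 h2
  rw [← h2, h1, iteratedDeriv_const, if_neg hn]

theorem eventually_differentiableAt_iteratedDeriv_inv
    (hv : ∀ i < n, ∀ᶠ x in 𝓝 x₀, DifferentiableAt 𝕜 (iteratedDeriv i v) x)
    (hvne : ∀ᶠ x in 𝓝 x₀, v x ≠ 0) :
    ∀ i < n, ∀ᶠ x in 𝓝 x₀, DifferentiableAt 𝕜 (iteratedDeriv i v⁻¹) x := by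
  intro i
  induction i using Nat.strong_induction_on with
  | _ i ih =>
    rcases i with _ | m <;> intro hi
    · filter_upwards [hv 0 hi, hvne] with x hd hx
      simpa using hd.inv hx
    -- `G` is Leibniz' rule for `v * v⁻¹ = 1`, solved for `(v⁻¹)⁽ᵐ⁺¹⁾`.
    set G : 𝕜 → 𝕜 := fun x => -(∑ p ∈ antidiagonal m, ((m + 1).choose (p.1 + 1) : 𝕜) *
      (iteratedDeriv (p.1 + 1) v x * iteratedDeriv p.2 v⁻¹ x)) / v x
    have hG : iteratedDeriv (m + 1) v⁻¹ =ᶠ[𝓝 x₀] G := by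
      filter_upwards [eventually_sum_antidiagonal_choose_mul_iteratedDeriv_inv_eq_zero
        m.succ_ne_zero (fun j hj => hv j (by omega)) (fun j hj => ih j hj (by omega)) hvne, hvne]
        with x hsum hx
      rw [Nat.sum_antidiagonal_succ] at hsum
      rw [eq_div_iff hx]
      simp only [Nat.choose_zero_right, Nat.cast_one, one_mul, iteratedDeriv_zero] at hsum
      linear_combination hsum
    have hdiff : ∀ᶠ x in 𝓝 x₀, ∀ j ∈ range (m + 1),
        DifferentiableAt 𝕜 (iteratedDeriv (j + 1) v) x ∧
          DifferentiableAt 𝕜 (iteratedDeriv j v⁻¹) x :=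
      (eventually_all_finset _).2 fun j hj => by
        rw [mem_range] at hj
        exact (hv (j + 1) (by omega)).and (ih j (by omega) (by omega))
    have hv₀ : ∀ᶠ x in 𝓝 x₀, DifferentiableAt 𝕜 v x := by simpa using hv 0 (by omega)
    filter_upwards [hG.eventuallyEq_nhds, hdiff, hv₀, hvne] with x hGx hd hdv hx
    refine DifferentiableAt.congr_of_eventuallyEq ?_ hGx
    refine (DifferentiableAt.neg (DifferentiableAt.fun_sum fun p hp => ?_)).div hdv hx
    have hp' := mem_antidiagonal.1 hp
    exact ((hd p.1 (by simp; omega)).1.mul (hd p.2 (by simp; omega)).2).const_mul _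

theorem iteratedDeriv_inv_eq_factorial_mul_coeff_inv [CharZero 𝕜]
    (hv : ∀ i < n, ∀ᶠ x in 𝓝 x₀, DifferentiableAt 𝕜 (iteratedDeriv i v) x)
    (hvne : ∀ᶠ x in 𝓝 x₀, v x ≠ 0) :
    iteratedDeriv n v⁻¹ x₀ =
      (n ! : 𝕜) * coeff n (mk fun i => iteratedDeriv i v x₀ / (i ! : 𝕜))⁻¹ := by
  set T : 𝕜⟦X⟧ := mk fun i => iteratedDeriv i v x₀ / (i ! : 𝕜)
  set ψ : 𝕜⟦X⟧ := mk fun i => iteratedDeriv i v⁻¹ x₀ / (i ! : 𝕜)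
  have hv₀ : v x₀ ≠ 0 := hvne.self_of_nhds
  have hcoeff : ∀ m ≤ n, coeff m (T * ψ) = if m = 0 then 1 else 0 := by
    intro m hm
    rw [coeff_mul]
    rcases Nat.eq_zero_or_pos m with rfl | hm0
    · simp [T, ψ, hv₀]
    have hsum := (eventually_sum_antidiagonal_choose_mul_iteratedDeriv_inv_eq_zero hm0.ne'
      (fun i hi => hv i (by omega))
      (fun i hi => eventually_differentiableAt_iteratedDeriv_inv hv hvne i (by omega))
      hvne).self_of_nhds
    rw [if_neg hm0.ne', ← zero_div (m ! : 𝕜), ← hsum, sum_div]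
    refine sum_congr rfl fun p hp => ?_
    obtain ⟨i, j⟩ := p
    obtain rfl : i + j = m := mem_antidiagonal.1 hp
    have hfac : ((i + j).choose i * i ! * j ! : 𝕜) = (i + j)! := by
      rw [Nat.choose_symm_add]; exact_mod_cast Nat.add_choose_mul_factorial_mul_factorial i j
    have hi : (i ! : 𝕜) ≠ 0 := Nat.cast_ne_zero.2 i.factorial_ne_zero
    have hj : (j ! : 𝕜) ≠ 0 := Nat.cast_ne_zero.2 j.factorial_ne_zero
    have hc : ((i + j).choose i : 𝕜) ≠ 0 := Nat.cast_ne_zero.2 (Nat.choose_pos (by omega)).ne'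
    simp only [T, ψ, coeff_mk]
    rw [← hfac]
    field_simp
  have hψ := coeff_eq_coeff_inv_of_X_pow_dvd (f := T) (n := n + 1) (m := n) (by simpa [T] using hv₀)
    (X_pow_dvd_iff.2 fun m hm => by
      rw [map_sub, hcoeff m (by omega), coeff_one]; simp) n.lt_succ_self
  rw [← hψ, coeff_mk, mul_div_cancel₀ _ (Nat.cast_ne_zero.2 n.factorial_ne_zero)]

end Reciprocal

theorem reciprocal_rule (n : ℕ) (x₀ : ℝ) (v : ℝ → ℝ)
    (hv : ∀ i < n, ∀ᶠ x in nhds x₀, DifferentiableAt ℝ (iteratedDeriv i v) x)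
    (hvne : ∀ᶠ x in nhds x₀, v x ≠ 0) :
    iteratedDeriv n (fun x => 1 / v x) x₀ =
      (n.factorial : ℝ) *
        ∑ y ∈ (Fintype.piFinset fun _ : Fin n => Finset.range (n + 1)).filter
            (fun y => ∑ i : Fin n, ((i : ℕ) + 1) * y i = n),
          (Nat.multinomial Finset.univ y : ℝ) * (-1) ^ (∑ i, y i) /
              (v x₀) ^ ((∑ i, y i) + 1) *
            ∏ i : Fin n,
              (iteratedDeriv ((i : ℕ) + 1) v x₀ / (((i : ℕ) + 1).factorial : ℝ)) ^ y i := by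
  have hinv : (fun x => 1 / v x) = v⁻¹ := funext fun x => one_div (v x)
  rw [hinv, iteratedDeriv_inv_eq_factorial_mul_coeff_inv hv hvne,
    PowerSeries.coeff_inv_eq_sum_partitionMultiplicities _ (by simpa using hvne.self_of_nhds)]
  simp [partitionMultiplicities]
end

section
/- For every natural number n ≥ 2, the sum over all tuples (y₁, …, yₙ) of nonnegative integers satisfying Σᵢ₌₁ⁿ i·yᵢ = n of ( (Σᵢ yᵢ)! / (y₁! ⋯ yₙ!) ) · (−1)^{Σᵢ yᵢ}, computed in ℤ, equals 0; for n = 0 it equals 1 and for n = 1 it equals −1. -/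
/-!
Sorting the parts of a partition with `k` parts in all possible orders shows that the sum is the
coefficient of `X ^ n` in `∑ k ≤ n, (-q) ^ k`, where `q = X + X ^ 2 + ⋯ + X ^ n`. Since `X ∣ q`,
this truncated geometric series inverts `1 + q` modulo `X ^ (n + 1)`, and so does `1 - X`,
because `(1 - X) (1 + q) = 1 - X ^ (n + 1)`. Hence the sum is the coefficient of `X ^ n` in `1 - X`.
-/

open Finset

/-- The alternating sum over partitions of `n` of multinomial coefficients. -/
def partitionAltMultinomialSum (n : ℕ) : ℤ :=
  ∑ y ∈ (Fintype.piFinset fun _ : Fin n => Finset.range (n + 1)).filter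
      (fun y => ∑ i : Fin n, ((i : ℕ) + 1) * y i = n),
    (Nat.multinomial Finset.univ y : ℤ) * (-1) ^ (∑ i, y i)

open Polynomial

namespace Polynomial

variable {R : Type*}

theorem coeff_sum_C_mul_X_pow_pow {ι : Type*} [Fintype ι] [DecidableEq ι] [CommSemiring R]
    (c : ι → R) (w : ι → ℕ) (k m : ℕ) :
    ((∑ i, C (c i) * X ^ w i) ^ k).coeff m =
      ∑ y ∈ (piAntidiag univ k).filter (fun y => ∑ i, w i * y i = m),
        (Nat.multinomial univ y : R) * ∏ i, c i ^ y i := by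
  have hterm (y : ι → ℕ) : (Nat.multinomial univ y : R[X]) * ∏ i, (C (c i) * X ^ w i) ^ y i =
      C ((Nat.multinomial univ y : R) * ∏ i, c i ^ y i) * X ^ (∑ i, w i * y i) := by
    simp only [mul_pow, prod_mul_distrib, ← pow_mul, prod_pow_eq_pow_sum, ← C_pow, ← map_prod,
      map_mul, map_natCast, mul_assoc, mul_comm (w _)]
  simp only [sum_pow_eq_sum_piAntidiag, finsetSum_coeff, hterm, coeff_C_mul_X_pow, sum_filter,
    eq_comm]

theorem X_pow_dvd_geom_sum_neg_sub [CommRing R] {q u : R[X]} (n : ℕ) (hq : X ∣ q)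
    (hu : X ^ (n + 1) ∣ (1 + q) * u - 1) :
    X ^ (n + 1) ∣ ∑ k ∈ range (n + 1), (-q) ^ k - u := by
  set G := ∑ k ∈ range (n + 1), (-q) ^ k
  have hG : G * (-q - 1) = (-q) ^ (n + 1) - 1 := geom_sum_mul (-q) (n + 1)
  have hqn : X ^ (n + 1) ∣ (-q) ^ (n + 1) := pow_dvd_pow_of_dvd (dvd_neg.mpr hq) _
  have key : G - u = -(G * ((1 + q) * u - 1)) - u * (-q) ^ (n + 1) := by
    linear_combination -u * hG
  rw [key]
  exact dvd_sub (dvd_neg.mpr (dvd_mul_of_dvd_right hu _)) (dvd_mul_of_dvd_right hqn _)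

theorem coeff_eq_of_X_pow_dvd_sub [Ring R] {f g : R[X]} {n : ℕ} (h : X ^ (n + 1) ∣ f - g) :
    f.coeff n = g.coeff n :=
  sub_eq_zero.mp (by simpa using X_pow_dvd_iff.mp h n n.lt_succ_self)

end Polynomial

theorem sum_le_sum_succ_mul {n : ℕ} (y : Fin n → ℕ) :
    ∑ i, y i ≤ ∑ i : Fin n, ((i : ℕ) + 1) * y i :=
  sum_le_sum fun _ _ => Nat.le_mul_of_pos_left _ (Nat.succ_pos _)

theorem partitionAltMultinomialSum_eq_sum_coeff (n : ℕ) :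
    partitionAltMultinomialSum n =
      ∑ k ∈ range (n + 1), ((-∑ i : Fin n, (X : ℤ[X]) ^ ((i : ℕ) + 1)) ^ k).coeff n := by
  set S := (Fintype.piFinset fun _ : Fin n => range (n + 1)).filter
      (fun y => ∑ i : Fin n, ((i : ℕ) + 1) * y i = n)
  have hS : ∀ y ∈ S, ∑ i, y i ∈ range (n + 1) := fun y hy =>
    mem_range_succ_iff.mpr ((sum_le_sum_succ_mul y).trans (mem_filter.mp hy).2.le)
  have hfiber (k : ℕ) : S.filter (fun y => ∑ i, y i = k) =
      (piAntidiag univ k).filter (fun y : Fin n → ℕ => ∑ i : Fin n, ((i : ℕ) + 1) * y i = n) := by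
    ext y
    simp only [S, mem_filter, Fintype.mem_piFinset, mem_piAntidiag, mem_range]
    constructor
    · rintro ⟨⟨-, hw⟩, hk⟩
      exact ⟨⟨hk, fun i _ => mem_univ i⟩, hw⟩
    · rintro ⟨⟨hk, -⟩, hw⟩
      refine ⟨⟨fun i => ?_, hw⟩, hk⟩
      have := (single_le_sum (fun j _ => Nat.zero_le (y j)) (mem_univ i)).trans
        ((sum_le_sum_succ_mul y).trans hw.le)
      omega
  have hneg : -∑ i : Fin n, (X : ℤ[X]) ^ ((i : ℕ) + 1) =
      ∑ i : Fin n, C (-1) * X ^ ((i : ℕ) + 1) := by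
    simp
  rw [partitionAltMultinomialSum, ← sum_fiberwise_of_maps_to hS, hneg]
  refine sum_congr rfl fun k _ => ?_
  rw [coeff_sum_C_mul_X_pow_pow, hfiber]
  refine sum_congr rfl fun y _ => ?_
  rw [prod_pow_eq_pow_sum]

theorem partitionAltMultinomialSum_eq_coeff_one_sub_X (n : ℕ) :
    partitionAltMultinomialSum n = (1 - X : ℤ[X]).coeff n := by
  set q := ∑ i : Fin n, (X : ℤ[X]) ^ ((i : ℕ) + 1)
  have hq : X ∣ q := dvd_sum fun i _ => dvd_pow_self X (Nat.succ_ne_zero i)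
  have hq' : 1 + q = ∑ i ∈ range (n + 1), (X : ℤ[X]) ^ i := by
    rw [sum_range_succ', pow_zero, add_comm, ← Fin.sum_univ_eq_sum_range (fun i => X ^ (i + 1))]
  have hu : X ^ (n + 1) ∣ (1 + q) * (1 - X) - 1 := by
    rw [hq', mul_comm, mul_neg_geom_sum]
    simp
  rw [partitionAltMultinomialSum_eq_sum_coeff, ← finsetSum_coeff]
  exact coeff_eq_of_X_pow_dvd_sub (X_pow_dvd_geom_sum_neg_sub n hq hu)

theorem partition_alt_multinomial_sum (n : ℕ) :
    (2 ≤ n → partitionAltMultinomialSum n = 0) ∧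
      partitionAltMultinomialSum 0 = 1 ∧ partitionAltMultinomialSum 1 = -1 := by
  simp only [partitionAltMultinomialSum_eq_coeff_one_sub_X, coeff_sub, coeff_one, coeff_X]
  refine ⟨fun hn => ?_, by simp, by simp⟩
  rw [if_neg (by omega), if_neg (by omega), sub_zero]
end

section
/- Let n be a natural number, let a be a real number with a > 0, and let x₀ be a real number with x₀ > 1. Then the n-th derivative of the function x ↦ (ln a)/(ln x) at x₀ equals ((ln a)/(ln x₀)) · ((−1)ⁿ n! / x₀ⁿ) · Σ_{y} [ ( (Σᵢ yᵢ)! / (ln x₀)^{Σᵢ yᵢ} ) · Πᵢ₌₁ⁿ ( 1 / (i^{yᵢ} · yᵢ!) ) ], where the sum runs over all tuples y = (y₁, …, yₙ) of nonnegative integers satisfying Σᵢ₌₁ⁿ i·yᵢ = n. -/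
/-!
Put `u = (log x)⁻¹`. Up to sign, differentiating `x⁻ⁿ uᵐ⁺¹` gives `x⁻ⁿ⁻¹ (n uᵐ⁺¹ + (m + 1) uᵐ⁺²)`,
which is the recurrence of the unsigned Stirling numbers of the first kind `s(n, m)`; hence the
`n`-th derivative of `c / log x` is `(-1)ⁿ c x⁻ⁿ ∑ₘ m! s(n, m) uᵐ⁺¹`.

The partition sum is then identified by Cauchy's formula `n! P(n, m) = s(n, m)`, where `P(k, m)`
is the sum of the weights `w(y) = ∏ 1 / (iʸⁱ yᵢ!)` over the partitions `y` of `k` into `m` parts.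
Removing one part of size `i` from `y` turns `i yᵢ w(y)` into the weight of the smaller partition,
and summing over `i` gives `(k + 1) P(k + 1, m + 1) = ∑_{j ≤ k} P(j, m)`, from which the Stirling
recurrence for `n! P(n, m)` follows.
-/

open Finset Nat Topology

theorem sum_factorial_mul_stirlingFirst_succ_mul_pow {R : Type*} [CommSemiring R] (n : ℕ) (u : R) :
    ∑ m ∈ range (n + 2), (m ! * stirlingFirst (n + 1) m : R) * u ^ (m + 1) =
      ∑ m ∈ range (n + 1),
        (m ! * stirlingFirst n m : R) * (n * u ^ (m + 1) + (m + 1) * u ^ (m + 2)) := by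
  set F : ℕ → R := fun m => (m ! * stirlingFirst n m : R) * u ^ (m + 1)
  have hF0 : (n : R) * F 0 = 0 := by cases n <;> simp [F]
  have hFn : F (n + 1) = 0 := by simp [F, stirlingFirst_eq_zero_of_lt (Nat.lt_succ_self n)]
  have shift : ∑ m ∈ range (n + 1), (n : R) * F (m + 1) = ∑ m ∈ range (n + 1), (n : R) * F m := by
    have h₁ := sum_range_succ' (fun m => (n : R) * F m) (n + 1)
    have h₂ := sum_range_succ (fun m => (n : R) * F m) (n + 1)
    rw [hF0, add_zero] at h₁
    rw [hFn, mul_zero, add_zero] at h₂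
    rw [← h₁, h₂]
  calc _ = ∑ m ∈ range (n + 1),
          ((n : R) * F (m + 1) + ((m + 1) ! * stirlingFirst n m : R) * u ^ (m + 2)) := by
        rw [sum_range_succ', stirlingFirst_succ_zero, Nat.cast_zero, mul_zero, zero_mul, add_zero]
        refine sum_congr rfl fun m _ => ?_
        rw [stirlingFirst_succ_succ]; push_cast; ring
    _ = _ := by
        rw [sum_add_distrib, shift, ← sum_add_distrib]
        refine sum_congr rfl fun m _ => ?_
        push_cast [F, Nat.factorial_succ]; ring

theorem hasDerivAt_inv_pow {𝕜 : Type*} [NontriviallyNormedField 𝕜] (n : ℕ) {x : 𝕜} (hx : x ≠ 0) :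
    HasDerivAt (fun t => (t ^ n)⁻¹) (-n / x ^ (n + 1)) x := by
  refine ((hasDerivAt_pow n x).fun_inv (pow_ne_zero n hx)).congr_deriv ?_
  cases n with
  | zero => simp
  | succ k => rw [Nat.add_sub_cancel]; field_simp; ring

theorem hasDerivAt_sum_mul_inv_log_pow (a : ℕ → ℝ) (N : ℕ) {x : ℝ} (hx : Real.log x ≠ 0) :
    HasDerivAt (fun t => ∑ m ∈ range N, a m * (Real.log t)⁻¹ ^ (m + 1))
      (-x⁻¹ * ∑ m ∈ range N, a m * ((m + 1) * (Real.log x)⁻¹ ^ (m + 2))) x := by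
  have hx₀ : x ≠ 0 := by rintro rfl; simp at hx
  have hu : HasDerivAt (fun t => (Real.log t)⁻¹) (-x⁻¹ * (Real.log x)⁻¹ ^ 2) x :=
    ((Real.hasDerivAt_log hx₀).fun_inv hx).congr_deriv (by field_simp)
  rw [mul_sum]
  refine HasDerivAt.fun_sum fun m _ => ((hu.pow (m + 1)).const_mul (a m)).congr_deriv ?_
  push_cast; ring

theorem iteratedDeriv_div_log (c : ℝ) (n : ℕ) {x : ℝ} (hx : Real.log x ≠ 0) :
    iteratedDeriv n (fun x => c / Real.log x) x =
      (-1) ^ n * c * (x ^ n)⁻¹ *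
        ∑ m ∈ range (n + 1), (m ! * stirlingFirst n m : ℝ) * (Real.log x)⁻¹ ^ (m + 1) := by
  induction n generalizing x with
  | zero => simp [div_eq_mul_inv]
  | succ n ih =>
    have hx₀ : x ≠ 0 := by rintro rfl; simp at hx
    have hnhds : {t : ℝ | Real.log t ≠ 0} ∈ 𝓝 x :=
      (Real.continuousAt_log hx₀).eventually_ne hx
    rw [iteratedDeriv_succ, (Filter.eventuallyEq_of_mem hnhds fun t ht => ih ht).deriv_eq]
    refine ((((hasDerivAt_inv_pow n hx₀).const_mul ((-1) ^ n * c)).mul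
      (hasDerivAt_sum_mul_inv_log_pow _ _ hx)).deriv.trans ?_)
    rw [sum_factorial_mul_stirlingFirst_succ_mul_pow]
    simp only [mul_add, sum_add_distrib, mul_left_comm _ (n : ℝ), ← mul_sum]
    field_simp
    ring

/-- `y i` is the multiplicity of the part `i + 1`. The bound `y i ≤ N` only makes the set finite;
it is automatic when `k ≤ N`. -/
def partitionVectors (N k : ℕ) : Finset (Fin N → ℕ) :=
  (Fintype.piFinset fun _ => range (N + 1)).filter fun y => ∑ i : Fin N, ((i : ℕ) + 1) * y i = k

noncomputable def cycleIndexWeight {N : ℕ} (y : Fin N → ℕ) : ℝ :=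
  ∏ i : Fin N, (1 / ((((i : ℕ) + 1) ^ y i * (y i).factorial : ℕ) : ℝ))

noncomputable def cycleIndexSum (N k m : ℕ) : ℝ :=
  ∑ y ∈ partitionVectors N k with ∑ i, y i = m, cycleIndexWeight y

section
variable {N k : ℕ}

theorem le_sum_succ_mul (y : Fin N → ℕ) (i : Fin N) : y i ≤ ∑ j : Fin N, ((j : ℕ) + 1) * y j :=
  (Nat.le_mul_of_pos_left _ i.val.succ_pos).trans
    (single_le_sum (f := fun j : Fin N => ((j : ℕ) + 1) * y j) (fun _ _ => zero_le _) (mem_univ i))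

theorem mem_partitionVectors (hk : k ≤ N) {y : Fin N → ℕ} :
    y ∈ partitionVectors N k ↔ ∑ i : Fin N, ((i : ℕ) + 1) * y i = k := by
  simp only [partitionVectors, mem_filter, Fintype.mem_piFinset, mem_range, and_iff_right_iff_imp]
  rintro rfl i
  exact Nat.lt_succ_of_le ((le_sum_succ_mul y i).trans hk)

theorem sum_mul_add_single (c y : Fin N → ℕ) (i : Fin N) :
    ∑ j, c j * (y + Pi.single i 1 : Fin N → ℕ) j = ∑ j, c j * y j + c i := by
  simp [mul_add, sum_add_distrib, Pi.single_apply]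

theorem partitionVectors_zero : partitionVectors N 0 = {0} := by
  ext y
  refine ⟨fun hy => mem_singleton.2 (funext fun i => ?_), fun hy => ?_⟩
  · simpa using (le_sum_succ_mul y i).trans (mem_filter.1 hy).2.le
  · simp [mem_singleton.1 hy, partitionVectors]

theorem cycleIndexSum_zero_left (m : ℕ) : cycleIndexSum N 0 m = if m = 0 then 1 else 0 := by
  rw [cycleIndexSum, partitionVectors_zero, filter_singleton]
  split_ifs <;> simp_all [cycleIndexWeight, eq_comm]

theorem cycleIndexSum_succ_zero : cycleIndexSum N (k + 1) 0 = 0 := by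
  refine sum_eq_zero fun y hy => absurd ?_ k.succ_ne_zero
  simp only [partitionVectors, mem_filter, sum_eq_zero_iff, mem_univ, true_implies] at hy
  simpa [hy.2] using hy.1.2.symm

theorem cycleIndexWeight_pos (y : Fin N → ℕ) : 0 < cycleIndexWeight y := by
  unfold cycleIndexWeight; positivity

theorem cycleIndexWeight_add_single (y : Fin N → ℕ) (i : Fin N) :
    (((i : ℕ) + 1) * (y i + 1) : ℝ) * cycleIndexWeight (y + Pi.single i 1 : Fin N → ℕ) =
      cycleIndexWeight y := by
  rw [cycleIndexWeight, cycleIndexWeight, Fintype.prod_eq_mul_prod_compl i,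
    Fintype.prod_eq_mul_prod_compl i (f := fun j => (1 / ((((j : ℕ) + 1) ^ y j * (y j)! : ℕ) : ℝ))),
    ← mul_assoc]
  congr 1
  · simp only [Pi.add_apply, Pi.single_eq_same, pow_succ, Nat.factorial_succ]
    push_cast
    field_simp
  · refine prod_congr rfl fun j hj => ?_
    rw [Pi.add_apply, Pi.single_eq_of_ne (by simpa using hj), add_zero]

theorem sum_succ_mul_mul_cycleIndexWeight {j : ℕ} (i : Fin N) (hj : j + (i + 1) ≤ N) (m : ℕ) :
    ∑ y ∈ partitionVectors N (j + (i + 1)) with ∑ l, y l = m + 1,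
        (((i : ℕ) + 1) * y i : ℝ) * cycleIndexWeight y = cycleIndexSum N j m := by
  have hsum (y : Fin N → ℕ) : ∑ l, (y + Pi.single i 1 : Fin N → ℕ) l = ∑ l, y l + 1 := by
    simpa using sum_mul_add_single 1 y i
  refine (sum_bij_ne_zero (fun y _ _ => y + Pi.single i 1) (fun y hy _ => ?_)
    (fun _ _ _ _ _ _ => add_right_cancel) (fun b hb hb0 => ?_) (fun y _ _ => ?_)).symm
  · simp only [mem_filter, mem_partitionVectors hj, mem_partitionVectors (le_of_add_le_left hj)]
      at hy ⊢
    rw [sum_mul_add_single, hsum, hy.1, hy.2]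
    exact ⟨rfl, rfl⟩
  · have hbi : b i ≠ 0 := by rintro h; simp [h] at hb0
    obtain ⟨a, ha⟩ : ∃ a : Fin N → ℕ, a + Pi.single i 1 = b := by
      refine ⟨b - Pi.single i 1, funext fun l => ?_⟩
      by_cases hl : l = i
      · subst hl; simp; omega
      · simp [Pi.single_eq_of_ne hl]
    simp only [mem_filter, mem_partitionVectors hj, mem_partitionVectors (le_of_add_le_left hj)]
      at hb ⊢
    refine ⟨a, ⟨?_, ?_⟩, (cycleIndexWeight_pos a).ne', ha⟩
    · have := sum_mul_add_single (fun l => (l : ℕ) + 1) a i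
      rw [ha, hb.1] at this
      omega
    · have := hsum a
      rw [ha, hb.2] at this
      omega
  · rw [← cycleIndexWeight_add_single y i]
    simp

theorem succ_mul_cycleIndexSum_succ (hk : k + 1 ≤ N) (m : ℕ) :
    (k + 1 : ℝ) * cycleIndexSum N (k + 1) (m + 1) =
      ∑ i ∈ range (k + 1), cycleIndexSum N (k - i) m := by
  have hslot (i : Fin N) : ∑ y ∈ partitionVectors N (k + 1) with ∑ l, y l = m + 1,
      (((i : ℕ) + 1) * y i : ℝ) * cycleIndexWeight y =
        if (i : ℕ) ≤ k then cycleIndexSum N (k - i) m else 0 := by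
    split_ifs with hi
    · obtain ⟨j, rfl⟩ := Nat.exists_eq_add_of_le hi
      rw [show (i : ℕ) + j + 1 = j + (i + 1) by ring, Nat.add_sub_cancel_left]
      exact sum_succ_mul_mul_cycleIndexWeight i (by omega) m
    · refine sum_eq_zero fun y hy => ?_
      have hle : ((i : ℕ) + 1) * y i ≤ k + 1 := (mem_partitionVectors hk).1 (mem_filter.1 hy).1 ▸
        single_le_sum (f := fun j : Fin N => ((j : ℕ) + 1) * y j) (fun _ _ => zero_le _)
          (mem_univ i)
      have : y i = 0 := by by_contra h; nlinarith [Nat.one_le_iff_ne_zero.2 h]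
      simp [this]
  calc (k + 1 : ℝ) * cycleIndexSum N (k + 1) (m + 1)
      = ∑ y ∈ partitionVectors N (k + 1) with ∑ l, y l = m + 1,
          ∑ i : Fin N, (((i : ℕ) + 1) * y i : ℝ) * cycleIndexWeight y := by
        rw [cycleIndexSum, mul_sum]
        refine sum_congr rfl fun y hy => ?_
        rw [← sum_mul]
        congr 1
        exact_mod_cast ((mem_partitionVectors hk).1 (mem_filter.1 hy).1).symm
    _ = ∑ i ∈ range N, if i ≤ k then cycleIndexSum N (k - i) m else 0 := by
        rw [sum_comm, ← Fin.sum_univ_eq_sum_range]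
        exact sum_congr rfl fun i _ => hslot i
    _ = ∑ i ∈ range (k + 1), cycleIndexSum N (k - i) m := by
        rw [← sum_filter]
        congr 1
        ext i
        simp only [mem_filter, mem_range]
        omega

theorem succ_mul_cycleIndexSum_succ_succ {n : ℕ} (hn : n + 1 ≤ N) (m : ℕ) :
    (n + 1 : ℝ) * cycleIndexSum N (n + 1) (m + 1) =
      n * cycleIndexSum N n (m + 1) + cycleIndexSum N n m := by
  rw [succ_mul_cycleIndexSum_succ hn, sum_range_succ', Nat.sub_zero]
  congr 1
  cases n with
  | zero => simp
  | succ k =>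
    simp only [Nat.add_sub_add_right]
    exact_mod_cast (succ_mul_cycleIndexSum_succ (by omega) m).symm

theorem factorial_mul_cycleIndexSum {n : ℕ} (hn : n ≤ N) (m : ℕ) :
    (n ! : ℝ) * cycleIndexSum N n m = stirlingFirst n m := by
  induction n generalizing m with
  | zero => rw [cycleIndexSum_zero_left]; cases m <;> simp
  | succ n ih =>
    cases m with
    | zero => simp [cycleIndexSum_succ_zero]
    | succ m =>
      calc ((n + 1)! : ℝ) * cycleIndexSum N (n + 1) (m + 1)
          = n ! * ((n + 1 : ℝ) * cycleIndexSum N (n + 1) (m + 1)) := by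
            push_cast [Nat.factorial_succ]; ring
        _ = n * (n ! * cycleIndexSum N n (m + 1)) + n ! * cycleIndexSum N n m := by
            rw [succ_mul_cycleIndexSum_succ_succ hn]; ring
        _ = stirlingFirst (n + 1) (m + 1) := by
            rw [ih (by omega), ih (by omega), stirlingFirst_succ_succ]; push_cast; ring

theorem sum_partitionVectors_eq_sum_cycleIndexSum (g : ℕ → ℝ) :
    ∑ y ∈ partitionVectors N k, g (∑ i, y i) * cycleIndexWeight y =
      ∑ m ∈ range (k + 1), g m * cycleIndexSum N k m := by
  refine (sum_fiberwise_of_maps_to (t := range (k + 1)) (g := fun y => ∑ i, y i)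
    (fun y hy => ?_) _).symm.trans (sum_congr rfl fun m _ => ?_)
  · rw [mem_range, Nat.lt_succ_iff, ← (mem_filter.1 hy).2]
    exact sum_le_sum fun i _ => Nat.le_mul_of_pos_left _ i.val.succ_pos
  · rw [cycleIndexSum, mul_sum]
    exact sum_congr rfl fun y hy => by rw [(mem_filter.1 hy).2]

end

theorem iteratedDeriv_log_base_general (n : ℕ) (a : ℝ) (x₀ : ℝ) (hx : 1 < x₀) :
    iteratedDeriv n (fun x => Real.log a / Real.log x) x₀ =
      (Real.log a / Real.log x₀) * ((-1) ^ n * (n.factorial : ℝ) / x₀ ^ n) *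
        ∑ y ∈ (Fintype.piFinset fun _ : Fin n => Finset.range (n + 1)).filter
            (fun y => ∑ i : Fin n, ((i : ℕ) + 1) * y i = n),
          (((∑ i, y i).factorial : ℝ) / (Real.log x₀) ^ (∑ i, y i)) *
            ∏ i : Fin n,
              (1 / ((((i : ℕ) + 1) ^ y i * (y i).factorial : ℕ) : ℝ)) := by
  have hL : Real.log x₀ ≠ 0 := (Real.log_pos hx).ne'
  rw [iteratedDeriv_div_log _ _ hL]
  have hsum := sum_partitionVectors_eq_sum_cycleIndexSum (N := n) (k := n)
    fun m => (m ! : ℝ) / Real.log x₀ ^ m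
  simp only [partitionVectors, cycleIndexWeight] at hsum
  rw [hsum, mul_sum, mul_sum]
  refine sum_congr rfl fun m _ => ?_
  rw [← factorial_mul_cycleIndexSum le_rfl]
  have : (n ! : ℝ) ≠ 0 := by positivity
  rw [inv_pow]
  field_simp
  ring

theorem iteratedDeriv_log_base (n : ℕ) (a : ℝ) (ha : 0 < a) (x₀ : ℝ) (hx : 1 < x₀) :
    iteratedDeriv n (fun x => Real.log a / Real.log x) x₀ =
      (Real.log a / Real.log x₀) * ((-1) ^ n * (n.factorial : ℝ) / x₀ ^ n) *
        ∑ y ∈ (Fintype.piFinset fun _ : Fin n => Finset.range (n + 1)).filter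
            (fun y => ∑ i : Fin n, ((i : ℕ) + 1) * y i = n),
          (((∑ i, y i).factorial : ℝ) / (Real.log x₀) ^ (∑ i, y i)) *
            ∏ i : Fin n,
              (1 / ((((i : ℕ) + 1) ^ y i * (y i).factorial : ℕ) : ℝ)) :=
  iteratedDeriv_log_base_general n a x₀ hx
end

section
/- Let n ≥ 1 be a natural number, let x₀ be a real number, and let v : ℝ → ℝ be n times differentiable in a neighborhood of x₀ with v positive in a neighborhood of x₀. Then the n-th derivative of x ↦ ln(v(x)) at x₀ equals n! · Σ_{y} [ ( (Σᵢ yᵢ − 1)! · (−1)^{(Σᵢ yᵢ) − 1} / v(x₀)^{Σᵢ yᵢ} ) · Πᵢ₌₁ⁿ (1/yᵢ!) · ( v⁽ⁱ⁾(x₀)/i! )^{yᵢ} ], where the sum runs over all tuples y = (y₁, …, yₙ) of nonnegative integers satisfying Σᵢ₌₁ⁿ i·yᵢ = n (for each such tuple Σᵢ yᵢ ≥ 1 since n ≥ 1). -/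
/-!
Write `b k = v⁽ᵏ⁾ / k!` and, for a tuple `y` with `s = ∑ yᵢ`,
`T y = (-1)^(s-1) (s-1)! / v^s * ∏ b (i+1)^(yᵢ) / yᵢ!`. Differentiating `T y` either hits
`v^(-s)`, which (as `v' = b 1`) turns `T y` into `(y₀ + 1) T (y + e₀)`, or hits the divided
power `b (j+1)^(yⱼ) / yⱼ!`, which (as `b k' = (k+1) b (k+1)`) moves one unit from `yⱼ` to `yⱼ₊₁`
with factor `(j + 2) (yⱼ₊₁ + 1)`. Both moves raise the weight `∑ (i+1) yᵢ` by one, and after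
reindexing every tuple `z` of weight `m + 1` is reached with total multiplicity
`∑ (i+1) zᵢ = m + 1`. This is the induction step from the `m`-th to the `(m+1)`-st derivative.
-/

open Finset Filter

namespace LogFaaDiBruno

variable {M : ℕ}

def weight (y : Fin M → ℕ) : ℕ := ∑ i : Fin M, ((i : ℕ) + 1) * y i

def tuplesOfWeight (M m : ℕ) : Finset (Fin M → ℕ) :=
  (Fintype.piFinset fun _ : Fin M => range (m + 1)).filter fun y => weight y = m

theorem le_weight (y : Fin M → ℕ) (k : Fin M) : ((k : ℕ) + 1) * y k ≤ weight y :=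
  single_le_sum (f := fun i : Fin M => ((i : ℕ) + 1) * y i) (fun _ _ => Nat.zero_le _)
    (mem_univ k)

@[simp]
theorem mem_tuplesOfWeight {m : ℕ} {y : Fin M → ℕ} : y ∈ tuplesOfWeight M m ↔ weight y = m := by
  refine mem_filter.trans ⟨And.right, fun h => ⟨Fintype.mem_piFinset.2 fun k => ?_, h⟩⟩
  have := le_weight y k
  exact mem_range.2 (by nlinarith)

theorem eq_zero_of_weight_lt {y : Fin M → ℕ} {k : Fin M} (h : weight y < (k : ℕ) + 1) :
    y k = 0 := by
  have := le_weight y k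
  by_contra hk
  nlinarith [Nat.one_le_iff_ne_zero.2 hk]

theorem sum_mul_update_add {c : Fin M → ℕ} (y : Fin M → ℕ) (k : Fin M) (t : ℕ) :
    ∑ i, c i * Function.update y k t i + c k * y k = ∑ i, c i * y i + c k * t := by
  have h₁ :=
    sum_eq_add_sum_sdiff_singleton_of_mem (mem_univ k) fun i => c i * Function.update y k t i
  have h₂ := sum_eq_add_sum_sdiff_singleton_of_mem (mem_univ k) fun i => c i * y i
  have h₃ : ∑ i ∈ univ \ {k}, c i * Function.update y k t i = ∑ i ∈ univ \ {k}, c i * y i :=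
    sum_congr rfl fun i hi => by
      rw [Function.update_of_ne (by simpa using hi)]
  simp only [Function.update_self] at h₁
  omega

theorem weight_update_add (y : Fin M → ℕ) (k : Fin M) (t : ℕ) :
    weight (Function.update y k t) + ((k : ℕ) + 1) * y k = weight y + ((k : ℕ) + 1) * t :=
  sum_mul_update_add (c := fun i : Fin M => (i : ℕ) + 1) y k t

theorem sum_update_add (y : Fin M → ℕ) (k : Fin M) (t : ℕ) :
    ∑ i, Function.update y k t i + y k = ∑ i, y i + t := by
  simpa using sum_mul_update_add (c := fun _ => 1) y k t

theorem sum_tuplesOfWeight_update_succ (k : Fin M) (g : (Fin M → ℕ) → ℝ) (m : ℕ) :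
    ∑ y ∈ tuplesOfWeight M m, g (Function.update y k (y k + 1)) =
      ∑ z ∈ tuplesOfWeight M (m + ((k : ℕ) + 1)), if z k = 0 then 0 else g z := by
  rw [sum_ite, sum_const_zero, zero_add]
  refine sum_nbij' (fun y => Function.update y k (y k + 1))
    (fun z => Function.update z k (z k - 1)) ?_ ?_ ?_ ?_ fun _ _ => rfl
  · intro y hy
    have := weight_update_add y k (y k + 1)
    simp only [mem_filter, mem_tuplesOfWeight, Function.update_self] at hy ⊢
    refine ⟨?_, by omega⟩
    nlinarith
  · intro z hz
    have := weight_update_add z k (z k - 1)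
    simp only [mem_filter, mem_tuplesOfWeight] at hz ⊢
    obtain ⟨hw, hk⟩ := hz
    obtain ⟨t, ht⟩ := Nat.exists_eq_succ_of_ne_zero hk
    rw [ht, Nat.succ_sub_one] at this ⊢
    nlinarith
  · intro y _
    simp
  · intro z hz
    simp only [mem_filter] at hz
    simp [Nat.sub_add_cancel (Nat.one_le_iff_ne_zero.2 hz.2)]

theorem sum_tuplesOfWeight_mul_update_succ (k : Fin M) (g : (Fin M → ℕ) → ℝ) (m : ℕ) :
    ∑ y ∈ tuplesOfWeight M m, ((y k : ℝ) + 1) * g (Function.update y k (y k + 1)) =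
      ∑ z ∈ tuplesOfWeight M (m + ((k : ℕ) + 1)), (z k : ℝ) * g z := by
  have := sum_tuplesOfWeight_update_succ k (fun z => (z k : ℝ) * g z) m
  simp only [Function.update_self, Nat.cast_add, Nat.cast_one] at this
  rw [this]
  refine sum_congr rfl fun z _ => ?_
  split_ifs with h <;> simp [h]

theorem sum_tuplesOfWeight_transfer (a b : Fin M) (hab : (b : ℕ) = a + 1)
    (g : (Fin M → ℕ) → ℝ) (m : ℕ) :
    ∑ y ∈ tuplesOfWeight M m, (if y a = 0 then 0 else
        ((y b : ℝ) + 1) * g (Function.update (Function.update y a (y a - 1)) b (y b + 1))) =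
      ∑ z ∈ tuplesOfWeight M (m + 1), (z b : ℝ) * g z := by
  have hba : b ≠ a := fun h => by simp [h] at hab
  by_cases hm : (a : ℕ) + 1 ≤ m
  · obtain ⟨m', rfl⟩ := Nat.exists_eq_add_of_le' hm
    rw [← sum_tuplesOfWeight_update_succ a _ m',
      show m' + (a + 1) + 1 = m' + ((b : ℕ) + 1) by omega,
      ← sum_tuplesOfWeight_mul_update_succ b g m']
    refine sum_congr rfl fun w _ => ?_
    simp [Function.update_of_ne hba, Function.update_idem]
  · push Not at hm
    rw [sum_eq_zero, sum_eq_zero]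
    · intro z hz
      simp [eq_zero_of_weight_lt (k := b) (by rw [mem_tuplesOfWeight.1 hz]; omega)]
    · intro y hy
      rw [if_pos (eq_zero_of_weight_lt (by rw [mem_tuplesOfWeight.1 hy]; omega))]

theorem succ_mul_sum_tuplesOfWeight {N : ℕ} (g : (Fin (N + 1) → ℕ) → ℝ) (m : ℕ) :
    ((m : ℝ) + 1) * ∑ z ∈ tuplesOfWeight (N + 1) (m + 1), g z =
      ∑ y ∈ tuplesOfWeight (N + 1) m,
        (((y 0 : ℝ) + 1) * g (Function.update y 0 (y 0 + 1)) +
          ∑ j : Fin N, ((j : ℝ) + 2) * (if y j.castSucc = 0 then 0 else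
            ((y j.succ : ℝ) + 1) * g (Function.update (Function.update y j.castSucc
              (y j.castSucc - 1)) j.succ (y j.succ + 1)))) := by
  have hweight : ∀ z ∈ tuplesOfWeight (N + 1) (m + 1),
      ((m : ℝ) + 1) * g z =
        (z 0 : ℝ) * g z + ∑ j : Fin N, ((j : ℝ) + 2) * ((z j.succ : ℝ) * g z) := by
    intro z hz
    have h := congrArg (Nat.cast : ℕ → ℝ) (mem_tuplesOfWeight.1 hz)
    simp only [weight, Fin.sum_univ_succ, Fin.val_zero, Fin.val_succ] at h
    push_cast at h
    rw [← h, add_mul, sum_mul]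
    congr 1
    · ring
    · exact sum_congr rfl fun j _ => by ring
  rw [mul_sum, sum_congr rfl hweight, sum_add_distrib, sum_add_distrib, sum_comm,
    sum_tuplesOfWeight_mul_update_succ 0 g m, sum_comm (s := tuplesOfWeight (N + 1) m)]
  congr 1
  refine sum_congr rfl fun j _ => ?_
  rw [← mul_sum, ← mul_sum, sum_tuplesOfWeight_transfer j.castSucc j.succ (by simp) g m]

noncomputable def logCoeff (s : ℕ) : ℝ := ((s - 1).factorial : ℝ) * (-1) ^ (s - 1)

noncomputable def dividedPow (m : ℕ) (t : ℝ) : ℝ := 1 / (m.factorial : ℝ) * t ^ m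

noncomputable def taylorCoeff (v : ℝ → ℝ) (k : ℕ) (x : ℝ) : ℝ :=
  iteratedDeriv k v x / (k.factorial : ℝ)

noncomputable def taylorMonomial (v : ℝ → ℝ) (y : Fin M → ℕ) (x : ℝ) : ℝ :=
  ∏ i, dividedPow (y i) (taylorCoeff v ((i : ℕ) + 1) x)

noncomputable def logTerm (v : ℝ → ℝ) (y : Fin M → ℕ) (x : ℝ) : ℝ :=
  logCoeff (∑ i, y i) / v x ^ (∑ i, y i) * taylorMonomial v y x

theorem logCoeff_succ {s : ℕ} (hs : s ≠ 0) : logCoeff (s + 1) = -s * logCoeff s := by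
  obtain ⟨t, rfl⟩ := Nat.exists_eq_succ_of_ne_zero hs
  simp only [logCoeff, Nat.succ_sub_one, Nat.factorial_succ, pow_succ]
  push_cast
  ring

theorem hasDerivAt_logCoeff_div_pow {v : ℝ → ℝ} {v' x : ℝ} {s : ℕ} (hs : s ≠ 0)
    (hv : HasDerivAt v v' x) (hx : v x ≠ 0) :
    HasDerivAt (fun x => logCoeff s / v x ^ s) (logCoeff (s + 1) / v x ^ (s + 1) * v') x := by
  have h := ((hv.fun_pow s).fun_inv (pow_ne_zero _ hx)).const_mul (logCoeff s)
  simp only [← div_eq_mul_inv] at h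
  refine h.congr_deriv ?_
  obtain ⟨t, rfl⟩ : ∃ t, s = t + 1 := ⟨s - 1, by omega⟩
  rw [logCoeff_succ hs]
  push_cast
  field_simp
  ring

theorem mul_dividedPow (m : ℕ) (t : ℝ) : t * dividedPow m t = (m + 1) * dividedPow (m + 1) t := by
  simp only [dividedPow, Nat.factorial_succ]
  push_cast
  field_simp
  ring

theorem hasDerivAt_dividedPow_succ {f : ℝ → ℝ} {f' x : ℝ} (m : ℕ) (hf : HasDerivAt f f' x) :
    HasDerivAt (fun x => dividedPow (m + 1) (f x)) (dividedPow m (f x) * f') x := by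
  refine ((hf.fun_pow (m + 1)).const_mul (1 / ((m + 1).factorial : ℝ))).congr_deriv ?_
  simp only [dividedPow, Nat.factorial_succ, Nat.add_sub_cancel]
  push_cast
  field_simp

theorem hasDerivAt_taylorCoeff {v : ℝ → ℝ} {x : ℝ} {k : ℕ}
    (h : DifferentiableAt ℝ (iteratedDeriv k v) x) :
    HasDerivAt (taylorCoeff v k) (((k : ℝ) + 1) * taylorCoeff v (k + 1) x) x := by
  refine (h.hasDerivAt.div_const (k.factorial : ℝ)).congr_deriv ?_
  simp only [taylorCoeff, iteratedDeriv_succ, Nat.factorial_succ]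
  push_cast
  field_simp

theorem prod_dividedPow_update (t : Fin M → ℝ) (y : Fin M → ℕ) (k : Fin M) (a : ℕ) :
    ∏ i, dividedPow (Function.update y k a i) (t i) =
      dividedPow a (t k) * ∏ i ∈ univ.erase k, dividedPow (y i) (t i) := by
  rw [← mul_prod_erase univ _ (mem_univ k), Function.update_self]
  congr 1
  exact prod_congr rfl fun i hi => by rw [Function.update_of_ne (ne_of_mem_erase hi)]

theorem mul_prod_dividedPow (t : Fin M → ℝ) (y : Fin M → ℕ) (k : Fin M) :
    t k * ∏ i, dividedPow (y i) (t i) =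
      ((y k : ℝ) + 1) * ∏ i, dividedPow (Function.update y k (y k + 1) i) (t i) := by
  rw [prod_dividedPow_update, ← mul_assoc, ← mul_dividedPow, ← mul_prod_erase univ _ (mem_univ k)]
  ring

theorem hasDerivAt_prod_dividedPow {f : Fin M → ℝ → ℝ} {f' : Fin M → ℝ} {x : ℝ}
    {y : Fin M → ℕ} (hf : ∀ j, y j ≠ 0 → HasDerivAt (f j) (f' j) x) :
    HasDerivAt (fun x => ∏ i, dividedPow (y i) (f i x))
      (∑ j, if y j = 0 then 0 else
        (∏ i, dividedPow (Function.update y j (y j - 1) i) (f i x)) * f' j) x := by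
  have hfactor : ∀ j ∈ univ, HasDerivAt (fun x => dividedPow (y j) (f j x))
      (if y j = 0 then 0 else dividedPow (y j - 1) (f j x) * f' j) x := by
    intro j _
    split_ifs with hj
    · simpa [hj, dividedPow] using hasDerivAt_const x (1 : ℝ)
    · obtain ⟨w, hw⟩ : ∃ w, y j = w + 1 := ⟨y j - 1, by omega⟩
      simpa [hw] using hasDerivAt_dividedPow_succ w (hf j hj)
  refine (HasDerivAt.fun_finsetProd hfactor).congr_deriv (sum_congr rfl fun j _ => ?_)
  split_ifs
  · simp
  · rw [prod_dividedPow_update, smul_eq_mul]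
    ring

theorem taylorCoeff_mul_taylorMonomial (v : ℝ → ℝ) (y : Fin M → ℕ) (k : Fin M) (x : ℝ) :
    taylorCoeff v ((k : ℕ) + 1) x * taylorMonomial v y x =
      ((y k : ℝ) + 1) * taylorMonomial v (Function.update y k (y k + 1)) x :=
  mul_prod_dividedPow (fun i => taylorCoeff v ((i : ℕ) + 1) x) y k

theorem hasDerivAt_taylorMonomial {v : ℝ → ℝ} {x : ℝ} {y : Fin M → ℕ}
    (hv : ∀ j, y j ≠ 0 → DifferentiableAt ℝ (iteratedDeriv ((j : ℕ) + 1) v) x) :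
    HasDerivAt (taylorMonomial v y)
      (∑ j, if y j = 0 then 0 else taylorMonomial v (Function.update y j (y j - 1)) x *
        (((j : ℝ) + 2) * taylorCoeff v ((j : ℕ) + 2) x)) x := by
  refine (hasDerivAt_prod_dividedPow fun j hj => (hasDerivAt_taylorCoeff (hv j hj))).congr_deriv ?_
  unfold taylorMonomial
  push_cast
  ring_nf

theorem hasDerivAt_logTerm {N : ℕ} {v : ℝ → ℝ} {x : ℝ} {y : Fin (N + 1) → ℕ}
    (hy : ∑ i, y i ≠ 0) (hlast : y (Fin.last N) = 0) (hx : v x ≠ 0)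
    (hv : DifferentiableAt ℝ v x)
    (hd : ∀ j, y j ≠ 0 → DifferentiableAt ℝ (iteratedDeriv ((j : ℕ) + 1) v) x) :
    HasDerivAt (logTerm v y)
      (((y 0 : ℝ) + 1) * logTerm v (Function.update y 0 (y 0 + 1)) x +
        ∑ j : Fin N, ((j : ℝ) + 2) * (if y j.castSucc = 0 then 0 else
          ((y j.succ : ℝ) + 1) * logTerm v (Function.update (Function.update y j.castSucc
            (y j.castSucc - 1)) j.succ (y j.succ + 1)) x)) x := by
  have hv' : HasDerivAt v (taylorCoeff v 1 x) x := by
    simpa [taylorCoeff, iteratedDeriv_one] using hv.hasDerivAt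
  refine ((hasDerivAt_logCoeff_div_pow hy hv' hx).mul
    (hasDerivAt_taylorMonomial hd)).congr_deriv ?_
  set s := ∑ i, y i
  have hraise : logCoeff (s + 1) / v x ^ (s + 1) * taylorCoeff v 1 x * taylorMonomial v y x =
      ((y 0 : ℝ) + 1) * logTerm v (Function.update y 0 (y 0 + 1)) x := by
    have hsum := sum_update_add y 0 (y 0 + 1)
    have hmul := taylorCoeff_mul_taylorMonomial v y 0 x
    rw [Fin.val_zero, zero_add] at hmul
    rw [mul_assoc, hmul, logTerm, show ∑ i, Function.update y 0 (y 0 + 1) i = s + 1 by omega]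
    ring
  have htransfer (j : Fin N) (hj : y j.castSucc ≠ 0) :
      logCoeff s / v x ^ s * (taylorMonomial v (Function.update y j.castSucc (y j.castSucc - 1)) x *
        (((j.castSucc : ℕ) + 2 : ℝ) * taylorCoeff v ((j.castSucc : ℕ) + 2) x)) =
      ((j : ℝ) + 2) * (((y j.succ : ℝ) + 1) * logTerm v (Function.update (Function.update y
        j.castSucc (y j.castSucc - 1)) j.succ (y j.succ + 1)) x) := by
    have hne : j.succ ≠ j.castSucc := (Fin.castSucc_lt_succ (i := j)).ne'
    have hsum₁ := sum_update_add y j.castSucc (y j.castSucc - 1)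
    have hsum₂ := sum_update_add (Function.update y j.castSucc (y j.castSucc - 1)) j.succ
      (y j.succ + 1)
    have hmul := taylorCoeff_mul_taylorMonomial v
      (Function.update y j.castSucc (y j.castSucc - 1)) j.succ x
    rw [Function.update_of_ne hne] at hsum₂ hmul
    simp only [Fin.val_succ, add_assoc, one_add_one_eq_two] at hmul
    rw [Fin.val_castSucc, logTerm, show ∑ i, Function.update (Function.update y j.castSucc
      (y j.castSucc - 1)) j.succ (y j.succ + 1) i = s by omega]
    linear_combination (logCoeff s / v x ^ s * ((j : ℝ) + 2)) * hmul
  rw [hraise, Fin.sum_univ_castSucc, hlast, if_pos rfl, add_zero, mul_sum]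
  congr 1
  refine sum_congr rfl fun j _ => ?_
  split_ifs with hj
  · simp
  · exact htransfer j hj

theorem sum_ne_zero_of_weight_ne_zero {y : Fin M → ℕ} (h : weight y ≠ 0) : ∑ i, y i ≠ 0 := by
  intro hy
  refine h (sum_eq_zero fun i _ => ?_)
  simp [(sum_eq_zero_iff.1 hy) i (mem_univ i)]

theorem tuplesOfWeight_one (N : ℕ) : tuplesOfWeight (N + 1) 1 = {Pi.single 0 1} := by
  ext y
  simp only [mem_tuplesOfWeight, mem_singleton, weight, Fin.sum_univ_succ, Fin.val_zero,
    Fin.val_succ]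
  constructor
  · intro h
    have htail : ∀ j : Fin N, y j.succ = 0 := fun j => by
      have := single_le_sum (f := fun j : Fin N => ((j : ℕ) + 1 + 1) * y j.succ)
        (fun _ _ => Nat.zero_le _) (mem_univ j)
      by_contra hj
      nlinarith [Nat.one_le_iff_ne_zero.2 hj]
    have hhead : y 0 = 1 := by simpa [htail] using h
    funext i
    refine Fin.cases ?_ (fun j => ?_) i <;> simp [hhead, htail]
  · rintro rfl
    simp

theorem logTerm_single_zero (N : ℕ) (v : ℝ → ℝ) (x : ℝ) :
    logTerm v (Pi.single (0 : Fin (N + 1)) 1) x = taylorCoeff v 1 x / v x := by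
  simp [logTerm, taylorMonomial, logCoeff, dividedPow, Fin.prod_univ_succ, div_eq_mul_inv,
    mul_comm]

theorem iteratedDeriv_log_eqOn {N : ℕ} {v : ℝ → ℝ} {U : Set ℝ} (hU : IsOpen U)
    (hv : ∀ x ∈ U, ∀ i < N + 1, DifferentiableAt ℝ (iteratedDeriv i v) x)
    (hvU : ∀ x ∈ U, v x ≠ 0) {m : ℕ} (hm₁ : 1 ≤ m) (hm : m ≤ N + 1) :
    Set.EqOn (iteratedDeriv m fun x => Real.log (v x))
      (fun x => (m.factorial : ℝ) * ∑ y ∈ tuplesOfWeight (N + 1) m, logTerm v y x) U := by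
  induction m, hm₁ using Nat.le_induction with
  | base =>
    intro x hx
    have hlog := ((hv x hx 0 (Nat.succ_pos N)).hasDerivAt.log (hvU x hx)).deriv
    simp only [iteratedDeriv_zero] at hlog
    simp [iteratedDeriv_one, hlog, tuplesOfWeight_one, logTerm_single_zero, taylorCoeff]
  | succ m hm₁ ih =>
    intro x hx
    have hEq := (ih (by omega)).eventuallyEq_of_mem (hU.mem_nhds hx)
    have hterm : ∀ y ∈ tuplesOfWeight (N + 1) m, HasDerivAt (logTerm v y) _ x := fun y hy => by
      rw [mem_tuplesOfWeight] at hy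
      refine hasDerivAt_logTerm (sum_ne_zero_of_weight_ne_zero (by omega))
        (eq_zero_of_weight_lt (by simp; omega)) (hvU x hx) (hv x hx 0 (by omega))
        fun j hj => hv x hx _ ?_
      by_contra hjm
      exact hj (eq_zero_of_weight_lt (by omega))
    rw [iteratedDeriv_succ, hEq.deriv_eq, ((HasDerivAt.fun_sum hterm).const_mul _).deriv,
      ← succ_mul_sum_tuplesOfWeight (fun y => logTerm v y x), Nat.factorial_succ]
    push_cast
    ring

end LogFaaDiBruno

open LogFaaDiBruno in
theorem iteratedDeriv_log_comp (n : ℕ) (hn : 1 ≤ n) (x₀ : ℝ) (v : ℝ → ℝ)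
    (hv : ∀ i < n, ∀ᶠ x in nhds x₀, DifferentiableAt ℝ (iteratedDeriv i v) x)
    (hvpos : ∀ᶠ x in nhds x₀, 0 < v x) :
    iteratedDeriv n (fun x => Real.log (v x)) x₀ =
      (n.factorial : ℝ) *
        ∑ y ∈ (Fintype.piFinset fun _ : Fin n => Finset.range (n + 1)).filter
            (fun y => ∑ i : Fin n, ((i : ℕ) + 1) * y i = n),
          (((∑ i, y i) - 1).factorial : ℝ) * (-1) ^ ((∑ i, y i) - 1) /
              (v x₀) ^ (∑ i, y i) *
            ∏ i : Fin n,
              (1 / ((y i).factorial : ℝ)) *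
                (iteratedDeriv ((i : ℕ) + 1) v x₀ / (((i : ℕ) + 1).factorial : ℝ)) ^ y i := by
  obtain ⟨N, rfl⟩ : ∃ N, n = N + 1 := ⟨n - 1, by omega⟩
  have hgood : ∀ᶠ x in nhds x₀, (∀ i < N + 1, DifferentiableAt ℝ (iteratedDeriv i v) x) ∧
      v x ≠ 0 :=
    ((eventually_all_finite (Set.finite_Iio (N + 1))).2 hv).and (hvpos.mono fun _ h => h.ne')
  exact iteratedDeriv_log_eqOn isOpen_setOfPred_eventually_nhds
    (fun _ hx => hx.self_of_nhds.1) (fun _ hx => hx.self_of_nhds.2) hn le_rfl hgood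
end
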